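/- arXiv:1206.5213 — 4 statements merged into one kernel-verified Lean document; each statement's English description precedes it below -/
import Mathlib

section
/- For every prime p and nonzero integer j, Φ((p^j)₋) = Φ(p^j) / p, where (p^j)₋ is the largest nonzero prime power strictly less than p^j and Φ(x) = ∏_q q^{[[log_q x]]}. -/
noncomputable section

/-- The modified integer part `[[t]]`: `⌊t⌋` if `t ≥ 0` and `⌊t⌋ + 1` if `t < 0`. -/
def bb (t : ℝ) : ℤ := if 0 ≤ t then ⌊t⌋ else ⌊t⌋ + 1

/-- `Φ(x) = ∏_p p^{[[log_p x]]}`, the product running over all primes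
(all but finitely many factors equal `1`). -/
def Phi (x : ℝ) : ℝ := ∏ᶠ p : Nat.Primes, (p : ℝ) ^ bb (Real.logb p x)

/-- The set `P` of nonzero integer powers of primes. -/
def Pset : Set ℝ := {r | ∃ (p : ℕ) (j : ℤ), p.Prime ∧ j ≠ 0 ∧ r = (p : ℝ) ^ j}

/-- `n₊`: the next element of `P` after `n`. -/
def nplus (n : ℝ) : ℝ := sInf {m | m ∈ Pset ∧ n < m}

/-- `n₋`: the previous element of `P` before `n`. -/
def nminus (n : ℝ) : ℝ := sSup {m | m ∈ Pset ∧ m < n}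

end

/-! The exponent `bb (logb q x)` of `q` in `Phi x` is a step function of `x > 0` that jumps by one
exactly at the nonzero powers of `q`. Since `Pset` is locally finite in `(0, ∞)`, `(p ^ j)₋` is the
largest element of `Pset` below `p ^ j`, so the only nonzero prime power in `((p ^ j)₋, p ^ j]` is
`p ^ j` itself (a nonzero prime power determines its prime). Hence going from
`(p ^ j)₋` to `p ^ j` raises the exponent of `p` by one and leaves all other exponents unchanged. -/

open Real

lemma bb_eq_of_forall_intCast_notMem_Ioc {s t : ℝ} (hst : s ≤ t)
    (h : ∀ i : ℤ, i ≠ 0 → s < i → t < i) : bb s = bb t := by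
  rcases le_or_gt 0 s with hs | hs
  · have hts : t < ((⌊s⌋ + 1 : ℤ) : ℝ) :=
      h _ (by have := Int.floor_nonneg.mpr hs; omega) (by push_cast; exact Int.lt_floor_add_one s)
    have hfl : ⌊t⌋ = ⌊s⌋ := Int.floor_eq_iff.mpr ⟨(Int.floor_le s).trans hst, by exact_mod_cast hts⟩
    simp [bb, hs, hs.trans hst, hfl]
  rcases lt_or_ge t 0 with ht | ht
  · have hfl : ⌊t⌋ = ⌊s⌋ := by
      refine Int.floor_eq_iff.mpr ⟨(Int.floor_le s).trans hst, ?_⟩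
      by_cases h0 : ⌊s⌋ + 1 = 0
      · have : (⌊s⌋ : ℝ) + 1 = 0 := by exact_mod_cast h0
        linarith
      · have := h _ h0 (by push_cast; exact Int.lt_floor_add_one s)
        exact_mod_cast this
    simp [bb, hs.not_ge, ht.not_ge, hfl]
  · have ht1 : t < 1 := by exact_mod_cast h 1 one_ne_zero (by norm_num; linarith)
    have hs1 : -1 ≤ s := by
      by_contra! hs1
      have := h (-1) (by norm_num) (by exact_mod_cast hs1)
      push_cast at this
      linarith
    have hfs : ⌊s⌋ = -1 := Int.floor_eq_iff.mpr ⟨by exact_mod_cast hs1, by push_cast; linarith⟩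
    have hft : ⌊t⌋ = 0 := Int.floor_eq_zero_iff.mpr ⟨ht, ht1⟩
    simp [bb, hs.not_ge, ht, hfs, hft]

lemma bb_intCast_eq_bb_add_one {s : ℝ} {n : ℤ} (hn : n ≠ 0) (hs : s < n)
    (h : ∀ i : ℤ, i ≠ 0 → i < n → (i : ℝ) ≤ s) : bb n = bb s + 1 := by
  rcases eq_or_ne n 1 with rfl | hn1
  · have hs1 : -1 ≤ s := by exact_mod_cast h (-1) (by norm_num) (by norm_num)
    push_cast at hs
    rcases le_or_gt 0 s with hs0 | hs0
    · simp [bb, hs0, Int.floor_eq_zero_iff.mpr ⟨hs0, hs⟩]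
    · have hfs : ⌊s⌋ = -1 := Int.floor_eq_iff.mpr ⟨by exact_mod_cast hs1, by push_cast; linarith⟩
      simp [bb, hs0.not_ge, hfs]
  · have hlow : ((n - 1 : ℤ) : ℝ) ≤ s := h (n - 1) (by omega) (by omega)
    have hfs : ⌊s⌋ = n - 1 := Int.floor_eq_iff.mpr ⟨hlow, by push_cast; linarith⟩
    rcases le_or_gt 0 n with hn0 | hn0
    · have hs0 : (0 : ℝ) ≤ s := le_trans (by exact_mod_cast (by omega : (0 : ℤ) ≤ n - 1)) hlow
      simp [bb, hn0, hs0, hfs]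
    · have hs0 : s < 0 := hs.trans (by exact_mod_cast hn0)
      simp [bb, hn0.not_ge, hs0.not_ge, hfs]

lemma bb_eq_zero_of_abs_lt_one {t : ℝ} (ht : |t| < 1) : bb t = 0 := by
  obtain ⟨ht1, ht2⟩ := abs_lt.mp ht
  rcases le_or_gt 0 t with h0 | h0
  · simp [bb, h0, Int.floor_eq_zero_iff.mpr ⟨h0, ht2⟩]
  · have : ⌊t⌋ = -1 := Int.floor_eq_iff.mpr ⟨by push_cast; linarith, by push_cast; linarith⟩
    simp [bb, h0.not_ge, this]

lemma bb_logb_eq_of_forall_zpow_notMem_Ioc {b a c : ℝ} (hb : 1 < b) (ha : 0 < a) (hac : a ≤ c)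
    (h : ∀ i : ℤ, i ≠ 0 → a < b ^ i → c < b ^ i) : bb (logb b a) = bb (logb b c) := by
  refine bb_eq_of_forall_intCast_notMem_Ioc (logb_le_logb_of_le hb ha hac) fun i hi hai => ?_
  rw [logb_lt_iff_lt_rpow hb (ha.trans_le hac), rpow_intCast]
  rw [logb_lt_iff_lt_rpow hb ha, rpow_intCast] at hai
  exact h i hi hai

lemma Pset_pos {x : ℝ} (hx : x ∈ Pset) : 0 < x := by
  obtain ⟨q, k, hq, -, rfl⟩ := hx
  exact zpow_pos (by exact_mod_cast hq.pos) k

lemma exists_mem_Pset_lt {n : ℝ} (hn : 0 < n) : ∃ m ∈ Pset, m < n := by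
  obtain ⟨q, hqN, hq⟩ := Nat.exists_infinite_primes (⌈n⁻¹⌉₊ + 1)
  have hnq : n⁻¹ < q := (Nat.le_ceil _).trans_lt (by exact_mod_cast Nat.lt_of_succ_le hqN)
  refine ⟨(q : ℝ) ^ (-1 : ℤ), ⟨q, -1, hq, by norm_num, rfl⟩, ?_⟩
  rw [zpow_neg_one]
  exact inv_lt_of_inv_lt₀ hn hnq

/-- Since `|log (q ^ k)| = |k| log q` with `|k| ≥ 1` and `log q ≥ log 2`, both `q` and `|k|` are
bounded on `Pset ∩ [a, c]`. -/
lemma Pset_inter_Icc_finite {a : ℝ} (ha : 0 < a) (c : ℝ) : (Pset ∩ Set.Icc a c).Finite := by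
  set L := max |log a| |log c|
  obtain ⟨N, hN⟩ := exists_nat_ge (max (exp L) (L / log 2))
  refine (((Finset.Iic N ×ˢ Finset.Icc (-(N : ℤ)) N : Finset (ℕ × ℤ)) : Set (ℕ × ℤ)).toFinite.image
    fun z => (z.1 : ℝ) ^ z.2).subset ?_
  rintro _ ⟨⟨q, k, hq, hk, rfl⟩, hax, hxc⟩
  refine ⟨(q, k), ?_, rfl⟩
  have hlog2 : log 2 ≤ log q := log_le_log two_pos (by exact_mod_cast hq.two_le)
  have hlog2_pos : 0 < log 2 := log_pos one_lt_two
  have hk1 : (1 : ℝ) ≤ |(k : ℝ)| := by exact_mod_cast Int.one_le_abs hk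
  have hbound : |(k : ℝ)| * log q ≤ L := by
    rw [← abs_of_pos (hlog2_pos.trans_le hlog2), ← abs_mul, ← Real.log_zpow]
    exact abs_le_max_abs_abs (log_le_log ha hax) (log_le_log (ha.trans_le hax) hxc)
  have hqN : (q : ℝ) ≤ N := by
    refine le_trans ?_ ((le_max_left _ _).trans hN)
    rw [← exp_log (by exact_mod_cast hq.pos : (0 : ℝ) < q)]
    exact exp_le_exp.mpr (by nlinarith)
  have hkN : |(k : ℝ)| ≤ N := by
    refine le_trans ?_ ((le_max_right _ _).trans hN)
    rw [le_div_iff₀ hlog2_pos]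
    nlinarith
  have hkN' : |k| ≤ N := by exact_mod_cast hkN
  simp only [Finset.coe_product, Set.mem_prod, Finset.mem_coe, Finset.mem_Iic, Finset.mem_Icc]
  exact ⟨by exact_mod_cast hqN, abs_le.mp hkN'⟩

lemma isGreatest_nminus {n : ℝ} (hn : 0 < n) : IsGreatest {m | m ∈ Pset ∧ m < n} (nminus n) := by
  obtain ⟨m₀, hm₀, hm₀n⟩ := exists_mem_Pset_lt hn
  have hfin : (Pset ∩ Set.Icc m₀ n).Finite := Pset_inter_Icc_finite (Pset_pos hm₀) n
  obtain ⟨g, ⟨⟨hgP, hgn⟩, hm₀g⟩, hg⟩ := Set.exists_max_image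
    ({m | m ∈ Pset ∧ m < n} ∩ Set.Ici m₀) id
    (hfin.subset fun m ⟨⟨hmP, hmn⟩, hm₀m⟩ => ⟨hmP, hm₀m, hmn.le⟩) ⟨m₀, ⟨hm₀, hm₀n⟩, Set.self_mem_Ici⟩
  have hgreat : IsGreatest {m | m ∈ Pset ∧ m < n} g := by
    refine ⟨⟨hgP, hgn⟩, fun m hm => ?_⟩
    rcases le_or_gt m₀ m with hm₀m | hmm₀
    · exact hg m ⟨hm, hm₀m⟩
    · exact hmm₀.le.trans hm₀g
  rwa [nminus, hgreat.csSup_eq]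

/-- Compare `p`-adic valuations: `v_p (p ^ i) = i ≠ 0`, while `v_p (q ^ k) = 0` for `q ≠ p`. -/
lemma Nat.Prime.eq_of_cast_zpow_eq {p q : ℕ} (hp : p.Prime) (hq : q.Prime) {i k : ℤ} (hi : i ≠ 0)
    (h : (p : ℝ) ^ i = (q : ℝ) ^ k) : p = q := by
  have := Fact.mk hp
  have := Fact.mk hq
  by_contra hpq
  have hℚ : (p : ℚ) ^ i = (q : ℚ) ^ k := Rat.cast_injective (α := ℝ) (by push_cast; exact h)
  have := congrArg (padicValRat p) hℚ
  rw [padicValRat.zpow, padicValRat.zpow, padicValRat.self hp.one_lt, padicValRat.of_nat,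
    padicValNat_primes hpq] at this
  simp [hi] at this

lemma mulSupport_Phi_finite (x : ℝ) :
    (Function.mulSupport fun q : Nat.Primes => (q : ℝ) ^ bb (logb q x)).Finite := by
  obtain ⟨N, hN⟩ := exists_nat_ge (exp |log x|)
  refine ((Set.finite_Iic N).preimage Nat.Primes.coe_nat_injective.injOn).subset fun q hmem => ?_
  by_contra hqN
  have hq : (N : ℝ) < q := by exact_mod_cast not_le.mp hqN
  have hlogq : |log x| < log q := (lt_log_iff_exp_lt (by exact_mod_cast q.2.pos)).mpr (hN.trans_lt hq)
  have hbb : bb (logb q x) = 0 := by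
    refine bb_eq_zero_of_abs_lt_one ?_
    rw [logb, abs_div, abs_of_pos ((abs_nonneg _).trans_lt hlogq)]
    exact (div_lt_one ((abs_nonneg _).trans_lt hlogq)).mpr hlogq
  exact hmem (by simp [hbb])

lemma Phi_eq_mul_of_bb_logb {a c : ℝ} (p : Nat.Primes)
    (hp : bb (logb p c) = bb (logb p a) + 1) (hq : ∀ q ≠ p, bb (logb q c) = bb (logb q a)) :
    Phi c = Phi a * p := by
  have hterm : ∀ q : Nat.Primes, (q : ℝ) ^ bb (logb q c) =
      (q : ℝ) ^ bb (logb q a) * (Pi.mulSingle p ((p : ℕ) : ℝ) : Nat.Primes → ℝ) q := by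
    intro q
    rcases eq_or_ne q p with rfl | hqp
    · rw [hp, zpow_add₀ (by exact_mod_cast q.2.ne_zero), zpow_one, Pi.mulSingle_eq_same]
    · rw [hq q hqp, Pi.mulSingle_eq_of_ne hqp, mul_one]
  rw [Phi, Phi, finprod_congr hterm, finprod_mul_distrib (mulSupport_Phi_finite a)
    ((Set.finite_singleton p).subset Pi.mulSupport_mulSingle_subset),
    finprod_eq_single (Pi.mulSingle p _) p fun q hqp => Pi.mulSingle_eq_of_ne hqp _,
    Pi.mulSingle_eq_same]

section nminus_zpow

variable {p : Nat.Primes} {j : ℤ} {y : ℝ}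

lemma bb_logb_zpow_eq_bb_logb_add_one (hj : j ≠ 0)
    (hy : IsGreatest {m | m ∈ Pset ∧ m < (p : ℝ) ^ j} y) :
    bb (logb p ((p : ℝ) ^ j)) = bb (logb p y) + 1 := by
  have hp1 : (1 : ℝ) < p := by exact_mod_cast p.2.one_lt
  have hy0 : 0 < y := Pset_pos hy.1.1
  rw [← rpow_intCast, logb_rpow (by linarith) hp1.ne']
  refine bb_intCast_eq_bb_add_one hj ?_ fun i hi hij => ?_
  · rw [logb_lt_iff_lt_rpow hp1 hy0, rpow_intCast]
    exact hy.1.2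
  · rw [le_logb_iff_rpow_le hp1 hy0, rpow_intCast]
    exact hy.2 ⟨⟨p, i, p.2, hi, rfl⟩, zpow_lt_zpow_right₀ hp1 (by exact_mod_cast hij)⟩

lemma bb_logb_eq_bb_logb_zpow
    (hy : IsGreatest {m | m ∈ Pset ∧ m < (p : ℝ) ^ j} y) {q : Nat.Primes} (hqp : q ≠ p) :
    bb (logb q y) = bb (logb q ((p : ℝ) ^ j)) := by
  have hq1 : (1 : ℝ) < q := by exact_mod_cast q.2.one_lt
  refine bb_logb_eq_of_forall_zpow_notMem_Ioc hq1 (Pset_pos hy.1.1) hy.1.2.le fun i hi hyi => ?_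
  by_contra! hle
  rcases hle.lt_or_eq with hlt | heq
  · exact (hy.2 ⟨⟨q, i, q.2, hi, rfl⟩, hlt⟩).not_gt hyi
  · exact hqp (Nat.Primes.coe_nat_injective (q.2.eq_of_cast_zpow_eq p.2 hi heq))

end nminus_zpow

/-- For every prime `p` and nonzero integer `j`, `Phi ((p^j)₋) = Phi (p^j) / p`. -/
theorem stmt_3 (p : ℕ) (j : ℤ) (hp : p.Prime) (hj : j ≠ 0) :
    Phi (nminus ((p : ℝ) ^ j)) = Phi ((p : ℝ) ^ j) / p := by
  set P : Nat.Primes := ⟨p, hp⟩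
  have hy := isGreatest_nminus (zpow_pos (by exact_mod_cast hp.pos) j : (0 : ℝ) < (P : ℝ) ^ j)
  rw [Phi_eq_mul_of_bb_logb P (bb_logb_zpow_eq_bb_logb_add_one hj hy)
    fun q hqP => (bb_logb_eq_bb_logb_zpow hy hqP).symm]
  exact (mul_div_cancel_right₀ _ (by exact_mod_cast hp.ne_zero)).symm
end

section
/- The range of the function ‖·‖ : 𝔸_f → ℝ (defined by ‖x‖ = sup_p |x_p|_p/p if x ∈ ∏_p ℤ_p and ‖x‖ = sup_p |x_p|_p otherwise) is exactly {0} ∪ { p^j : p prime, j ∈ ℤ \ {0} }. In particular, ‖x‖ never equals 1. -/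
open Filter MeasureTheory
open scoped Classical

noncomputable section

instance (p : Nat.Primes) : Fact (p.1.Prime) := ⟨p.2⟩

/-- The finite adele ring of `ℚ`, realized as the restricted product of the
fields `ℚ_[p]` with respect to the rings `ℤ_[p]`. -/
def adeleSubring : Subring (Π p : Nat.Primes, ℚ_[p.1]) where
  carrier := {x | ∀ᶠ p : Nat.Primes in Filter.cofinite, ‖x p‖ ≤ 1}
  zero_mem' := by
    show ∀ᶠ p : Nat.Primes in Filter.cofinite, ‖(0 : Π p : Nat.Primes, ℚ_[p.1]) p‖ ≤ 1
    exact Filter.Eventually.of_forall fun p => by simp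
  one_mem' := by
    show ∀ᶠ p : Nat.Primes in Filter.cofinite, ‖(1 : Π p : Nat.Primes, ℚ_[p.1]) p‖ ≤ 1
    exact Filter.Eventually.of_forall fun p => by simp
  add_mem' := by
    intro a b ha hb
    show ∀ᶠ p : Nat.Primes in Filter.cofinite, ‖(a + b) p‖ ≤ 1
    filter_upwards [ha, hb] with p hpa hpb
    exact le_trans (Padic.nonarchimedean _ _) (max_le hpa hpb)
  neg_mem' := by
    intro a ha
    show ∀ᶠ p : Nat.Primes in Filter.cofinite, ‖(-a) p‖ ≤ 1
    filter_upwards [ha] with p hp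
    simpa using hp
  mul_mem' := by
    intro a b ha hb
    show ∀ᶠ p : Nat.Primes in Filter.cofinite, ‖(a * b) p‖ ≤ 1
    filter_upwards [ha, hb] with p hpa hpb
    have h : ‖(a * b) p‖ = ‖a p‖ * ‖b p‖ := norm_mul _ _
    rw [h]
    nlinarith [norm_nonneg (a p), norm_nonneg (b p)]

/-- The finite adele ring `𝔸_f` as a type. -/
abbrev FA : Type := ↥adeleSubring

/-- `‖x‖₁ = sup_p |x_p|_p`. -/
def norm1 (x : FA) : ℝ := ⨆ p : Nat.Primes, ‖x.1 p‖

/-- `‖x‖₀ = sup_p |x_p|_p / p`. -/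
def norm0 (x : FA) : ℝ := ⨆ p : Nat.Primes, ‖x.1 p‖ / p

/-- The adelic norm `‖x‖`. -/
def anorm (x : FA) : ℝ := if ∀ p, ‖x.1 p‖ ≤ 1 then norm0 x else norm1 x

/-- The restricted product topology on `𝔸_f`. -/
def restrictedTop : TopologicalSpace FA :=
  TopologicalSpace.generateFrom
    { B | ∃ (S : Finset Nat.Primes) (U : Π p : Nat.Primes, Set ℚ_[p.1]),
        (∀ p, IsOpen (U p)) ∧
        B = {x : FA | (∀ p ∈ S, x.1 p ∈ U p) ∧ ∀ p ∉ S, ‖x.1 p‖ ≤ 1} }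

end


/-!
The supremum defining `‖x‖` is attained at some prime `q`: in the non-integral case because
`|x_p|_p ≤ 1` for almost all `p`, in the integral case because `|x_p|_p / p ≤ 1 / p → 0`.
Hence `‖x‖` is either `|x_q|_q = q^j > 1` or `|x_q|_q / q = q^(j-1) ≤ 1/q < 1`, an integer
power of `q` other than `1`. Conversely, adeles supported at a single prime attain every
`p^j` with `j ≠ 0`.
-/

theorem exists_iSup_eq_of_lt_of_eventually_le {ι α : Type*} [ConditionallyCompleteLinearOrder α]
    {f : ι → α} {c : α} {i₀ : ι} (h₀ : c < f i₀)
    (h : ∀ᶠ i in cofinite, f i ≤ c) : ∃ q, c < f q ∧ ⨆ i, f i = f q := by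
  have hfin : {i | c < f i}.Finite := by simpa only [not_le] using eventually_cofinite.mp h
  obtain ⟨q, hq, hmax⟩ := Set.exists_max_image _ f hfin ⟨i₀, h₀⟩
  have hle : ∀ i, f i ≤ f q := fun i =>
    (le_or_gt (f i) c).elim (fun hi => hi.trans hq.le) (fun hi => hmax i hi)
  exact ⟨q, hq, (show IsGreatest (Set.range f) (f q) from
    ⟨⟨q, rfl⟩, Set.forall_mem_range.2 hle⟩).csSup_eq⟩

theorem Nat.Primes.tendsto_inv_cofinite_zero :
    Tendsto (fun p : Nat.Primes => ((p : ℝ))⁻¹) cofinite (nhds 0) := by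
  have hcast : Tendsto (fun p : Nat.Primes => (p : ℕ)) cofinite atTop :=
    Nat.cofinite_eq_atTop ▸ Nat.Primes.coe_nat_injective.tendsto_cofinite
  exact tendsto_inv_atTop_zero.comp (tendsto_natCast_atTop_atTop.comp hcast)

theorem Nat.Primes.zpow_mem_Pset (p : Nat.Primes) {j : ℤ} (h : (p : ℝ) ^ j ≠ 1) :
    (p : ℝ) ^ j ∈ Pset :=
  ⟨p, j, p.2, by rintro rfl; exact h (zpow_zero _), rfl⟩

theorem one_notMem_Pset : (1 : ℝ) ∉ Pset := by
  rintro ⟨p, j, hp, hj, h⟩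
  have hp1 : (1 : ℝ) < p := by exact_mod_cast hp.one_lt
  exact hj ((zpow_eq_one_iff_right₀ (by positivity) hp1.ne').1 h.symm)

theorem Padic.exists_norm_eq_zpow {p : ℕ} [Fact p.Prime] {y : ℚ_[p]} (hy : y ≠ 0) :
    ∃ j : ℤ, ‖y‖ = (p : ℝ) ^ j :=
  ⟨_, Padic.norm_eq_zpow_neg_valuation hy⟩

theorem anorm_eq_zero_of_forall_eq_zero {x : FA} (hx : ∀ p, x.1 p = 0) : anorm x = 0 := by
  simp [anorm, norm0, hx]

theorem exists_anorm_eq_norm_of_one_lt {x : FA} {p : Nat.Primes} (hp : 1 < ‖x.1 p‖) :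
    ∃ q : Nat.Primes, 1 < ‖x.1 q‖ ∧ anorm x = ‖x.1 q‖ := by
  have hnot : ¬ ∀ p, ‖x.1 p‖ ≤ 1 := fun h => (h p).not_gt hp
  obtain ⟨q, hq, hsup⟩ :=
    exists_iSup_eq_of_lt_of_eventually_le (f := fun q => ‖x.1 q‖) hp x.2
  exact ⟨q, hq, by rw [anorm, if_neg hnot, norm1, hsup]⟩

theorem exists_anorm_eq_norm_div_of_forall_norm_le_one {x : FA} (hx : ∀ p, ‖x.1 p‖ ≤ 1)
    {p : Nat.Primes} (hp : x.1 p ≠ 0) :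
    ∃ q : Nat.Primes, x.1 q ≠ 0 ∧ anorm x = ‖x.1 q‖ / q := by
  set f : Nat.Primes → ℝ := fun q => ‖x.1 q‖ / q
  have hf : 0 < f p := by
    have := norm_pos_iff.2 hp
    have : (0 : ℝ) < p := by exact_mod_cast p.2.pos
    positivity
  -- `f q ≤ q⁻¹`, which tends to `0`
  have hsmall : ∀ᶠ q in cofinite, f q ≤ f p / 2 := by
    filter_upwards [Nat.Primes.tendsto_inv_cofinite_zero.eventually_lt_const (half_pos hf)]
      with q hq
    exact (mul_le_of_le_one_left (by positivity) (hx q)).trans hq.le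
  obtain ⟨q, hq, hsup⟩ := exists_iSup_eq_of_lt_of_eventually_le (half_lt_self hf) hsmall
  refine ⟨q, fun h0 => ?_, by rw [anorm, if_pos hx, norm0, hsup]⟩
  simp only [f, h0, norm_zero, zero_div] at hq
  exact hq.not_ge (half_pos hf).le

theorem anorm_mem_Pset_of_one_lt {x : FA} {p : Nat.Primes} (hp : 1 < ‖x.1 p‖) :
    anorm x ∈ Pset := by
  obtain ⟨q, hq, hanorm⟩ := exists_anorm_eq_norm_of_one_lt hp
  have hq0 : x.1 q ≠ 0 := fun h0 => hq.not_ge (by simp [h0])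
  obtain ⟨j, hj⟩ := Padic.exists_norm_eq_zpow hq0
  rw [hj] at hanorm hq
  exact hanorm ▸ q.zpow_mem_Pset hq.ne'

theorem anorm_mem_Pset_of_forall_norm_le_one {x : FA} (hx : ∀ p, ‖x.1 p‖ ≤ 1)
    {p : Nat.Primes} (hp : x.1 p ≠ 0) : anorm x ∈ Pset := by
  obtain ⟨q, hq, hanorm⟩ := exists_anorm_eq_norm_div_of_forall_norm_le_one hx hp
  obtain ⟨j, hj⟩ := Padic.exists_norm_eq_zpow hq
  have hq1 : (1 : ℝ) < q := by exact_mod_cast q.2.one_lt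
  have hlt : ‖x.1 q‖ / q < 1 :=
    (div_le_div_of_nonneg_right (hx q) (by positivity)).trans_lt
      ((div_lt_one (by positivity)).2 hq1)
  rw [hj, div_eq_mul_inv, ← zpow_sub_one₀ (by positivity)] at hanorm hlt
  exact hanorm ▸ q.zpow_mem_Pset hlt.ne

theorem anorm_mem_insert_zero_Pset (x : FA) : anorm x ∈ insert (0 : ℝ) Pset := by
  by_cases hx : ∀ p, ‖x.1 p‖ ≤ 1
  · by_cases hzero : ∀ p, x.1 p = 0
    · exact .inl (anorm_eq_zero_of_forall_eq_zero hzero)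
    obtain ⟨p, hp⟩ := not_forall.1 hzero
    exact .inr (anorm_mem_Pset_of_forall_norm_le_one hx hp)
  · obtain ⟨p, hp⟩ := not_forall.1 hx
    exact .inr (anorm_mem_Pset_of_one_lt (not_le.1 hp))

noncomputable def adeleSingle (p : Nat.Primes) (c : ℚ_[p.1]) : FA :=
  ⟨Pi.single p c, by
    filter_upwards [eventually_cofinite_ne p] with q hq
    simp [Pi.single_eq_of_ne hq]⟩

theorem adeleSingle_apply_ne {p q : Nat.Primes} (c : ℚ_[p.1]) (hq : q ≠ p) :
    (adeleSingle p c).1 q = 0 :=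
  Pi.single_eq_of_ne (M := fun q : Nat.Primes => ℚ_[q.1]) hq c

theorem adeleSingle_apply_self (p : Nat.Primes) (c : ℚ_[p.1]) : (adeleSingle p c).1 p = c :=
  Pi.single_eq_same (M := fun q : Nat.Primes => ℚ_[q.1]) p c

theorem anorm_adeleSingle_of_one_lt {p : Nat.Primes} {c : ℚ_[p.1]} (hc : 1 < ‖c‖) :
    anorm (adeleSingle p c) = ‖c‖ := by
  rw [← adeleSingle_apply_self p c] at hc
  obtain ⟨q, hq, hanorm⟩ := exists_anorm_eq_norm_of_one_lt hc
  obtain rfl : q = p := by_contra fun hne => hq.not_ge (by simp [adeleSingle_apply_ne c hne])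
  rwa [adeleSingle_apply_self] at hanorm

theorem anorm_adeleSingle_of_norm_le_one {p : Nat.Primes} {c : ℚ_[p.1]} (hc : ‖c‖ ≤ 1) :
    anorm (adeleSingle p c) = ‖c‖ / p := by
  have hx : ∀ q, ‖(adeleSingle p c).1 q‖ ≤ 1 := fun q => by
    rcases eq_or_ne q p with rfl | hne
    · rwa [adeleSingle_apply_self]
    · simp [adeleSingle_apply_ne c hne]
  rcases eq_or_ne c 0 with rfl | hc0
  · rw [norm_zero, zero_div]
    refine anorm_eq_zero_of_forall_eq_zero fun q => ?_
    rcases eq_or_ne q p with rfl | hne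
    · exact adeleSingle_apply_self q 0
    · exact adeleSingle_apply_ne 0 hne
  rw [← adeleSingle_apply_self p c] at hc0
  obtain ⟨q, hq, hanorm⟩ := exists_anorm_eq_norm_div_of_forall_norm_le_one hx hc0
  obtain rfl : q = p := by_contra fun hne => hq (adeleSingle_apply_ne c hne)
  rwa [adeleSingle_apply_self] at hanorm

theorem Pset_subset_range_anorm : Pset ⊆ Set.range anorm := by
  rintro _ ⟨p, j, hp, hj, rfl⟩
  obtain ⟨q, rfl⟩ : ∃ q : Nat.Primes, q.1 = p := ⟨⟨p, hp⟩, rfl⟩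
  have hq1 : (1 : ℝ) < q := by exact_mod_cast hp.one_lt
  rcases hj.lt_or_gt with hneg | hpos
  · -- `‖p^{-(j+1)}‖ = p^{j+1} ≤ 1`, and dividing by `p` gives `p^j`
    have hnorm : ‖(q.1 : ℚ_[q.1]) ^ (-(j + 1))‖ = (q : ℝ) ^ (j + 1) := by
      rw [Padic.norm_p_zpow, neg_neg]
    refine ⟨adeleSingle q ((q.1 : ℚ_[q.1]) ^ (-(j + 1))), ?_⟩
    rw [anorm_adeleSingle_of_norm_le_one (hnorm ▸ zpow_le_one_of_nonpos₀ hq1.le (by omega)),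
      hnorm, zpow_add_one₀ (by positivity), mul_div_cancel_right₀ _ (by positivity)]
  · have hnorm : ‖(q.1 : ℚ_[q.1]) ^ (-j)‖ = (q : ℝ) ^ j := by
      rw [Padic.norm_p_zpow, neg_neg]
    refine ⟨adeleSingle q ((q.1 : ℚ_[q.1]) ^ (-j)), ?_⟩
    rw [anorm_adeleSingle_of_one_lt (hnorm ▸ one_lt_zpow₀ hq1 hpos), hnorm]

/-- The range of the adelic norm is exactly `{0} ∪ {p^j : p prime, j ∈ ℤ \\ {0}}`;
in particular it never takes the value `1`. -/
theorem stmt_5 :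
    Set.range anorm = insert (0 : ℝ) Pset ∧ ∀ x : FA, anorm x ≠ 1 := by
  have hrange : Set.range anorm = insert (0 : ℝ) Pset :=
    (Set.range_subset_iff.2 anorm_mem_insert_zero_Pset).antisymm
      (Set.insert_subset ⟨0, anorm_eq_zero_of_forall_eq_zero fun _ => rfl⟩
        Pset_subset_range_anorm)
  refine ⟨hrange, fun x hx => ?_⟩
  have hmem : (1 : ℝ) ∈ insert (0 : ℝ) Pset := hx ▸ hrange ▸ Set.mem_range_self x
  exact hmem.elim one_ne_zero one_notMem_Pset
end

section
/- The metric ρ(x,y) = ‖x − y‖ on 𝔸_f induces the restricted product topology, and (𝔸_f, ρ) is a complete non-Archimedean metric space. -/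
open Filter MeasureTheory
open scoped Classical

/-!
Let `O = ∏ ℤ_p`. On `O` the norm is `sup_p |x_p|_p / p ≤ 1`, off `O` it is `sup_p |x_p|_p > 1`;
hence for `ε ≤ 1`, `‖x‖ ≤ ε` iff `x ∈ O` and `|x_p|_p ≤ ε p` for all `p`. Everything follows from
this description. Since `O` is closed under addition, the norm is ultrametric. Since
`|x_p|_p ≤ p ‖x‖`, the coordinates are Lipschitz, so basic open sets of the restricted product
are `ρ`-open; conversely, for `δ < ε`, the `ρ`-ball of radius `ε` about `x` contains the basic
open set prescribing `x_p` to within `min 1 (δ p)` at the finitely many `p` with `δ p < 1` or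
`x_p ∉ ℤ_p`. Coordinates of a `ρ`-Cauchy sequence converge in `ℚ_p`, and the description of
`‖x‖ ≤ ε` is stable under coordinatewise limits, which gives completeness.
-/

open Topology

lemma one_le_primes_cast (p : Nat.Primes) : (1 : ℝ) ≤ p := by
  exact_mod_cast p.2.one_lt.le

lemma primes_cast_pos (p : Nat.Primes) : (0 : ℝ) < p :=
  zero_lt_one.trans_le (one_le_primes_cast p)

lemma tendsto_primes_cast_cofinite : Tendsto (fun p : Nat.Primes => (p : ℝ)) cofinite atTop :=
  tendsto_natCast_atTop_atTop.comp (Nat.cofinite_eq_atTop ▸ Subtype.val_injective.tendsto_cofinite)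

lemma mem_adeleSubring {x : Π p : Nat.Primes, ℚ_[p.1]} :
    x ∈ adeleSubring ↔ ∀ᶠ p in cofinite, ‖x p‖ ≤ 1 :=
  Iff.rfl

lemma bddAbove_range_norm_apply (x : FA) : BddAbove (Set.range fun p => ‖x.1 p‖) := by
  refine (((eventually_cofinite.1 (mem_adeleSubring.1 x.2)).image fun p => ‖x.1 p‖).bddAbove.union
    (bddAbove_Iic (a := (1 : ℝ)))).mono ?_
  rintro _ ⟨p, rfl⟩
  by_cases hp : ‖x.1 p‖ ≤ 1
  exacts [Or.inr hp, Or.inl ⟨p, hp, rfl⟩]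

lemma bddAbove_range_norm_apply_div (x : FA) :
    BddAbove (Set.range fun p : Nat.Primes => ‖x.1 p‖ / p) := by
  obtain ⟨M, hM⟩ := bddAbove_range_norm_apply x
  exact ⟨M, Set.forall_mem_range.2 fun p =>
    (div_le_self (norm_nonneg _) (one_le_primes_cast p)).trans (hM ⟨p, rfl⟩)⟩

lemma norm_apply_le_norm1 (x : FA) (p : Nat.Primes) : ‖x.1 p‖ ≤ norm1 x :=
  le_ciSup (bddAbove_range_norm_apply x) p

lemma norm_apply_div_le_norm0 (x : FA) (p : Nat.Primes) : ‖x.1 p‖ / p ≤ norm0 x :=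
  le_ciSup (bddAbove_range_norm_apply_div x) p

lemma norm0_le_norm1 (x : FA) : norm0 x ≤ norm1 x :=
  ciSup_mono (bddAbove_range_norm_apply x) fun p =>
    div_le_self (norm_nonneg _) (one_le_primes_cast p)

lemma norm0_add_le (x y : FA) : norm0 (x + y) ≤ max (norm0 x) (norm0 y) := by
  refine ciSup_le fun p => ?_
  calc ‖x.1 p + y.1 p‖ / p ≤ max ‖x.1 p‖ ‖y.1 p‖ / p := by
        gcongr; exact IsUltrametricDist.norm_add_le_max _ _
    _ = max (‖x.1 p‖ / p) (‖y.1 p‖ / p) := (max_div_div_right (primes_cast_pos p).le _ _).symm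
    _ ≤ max (norm0 x) (norm0 y) :=
        max_le_max (norm_apply_div_le_norm0 x p) (norm_apply_div_le_norm0 y p)

lemma norm1_add_le (x y : FA) : norm1 (x + y) ≤ max (norm1 x) (norm1 y) :=
  ciSup_le fun p => (IsUltrametricDist.norm_add_le_max _ _).trans
    (max_le_max (norm_apply_le_norm1 x p) (norm_apply_le_norm1 y p))

lemma anorm_of_forall_norm_apply_le_one {x : FA} (h : ∀ p, ‖x.1 p‖ ≤ 1) :
    anorm x = norm0 x :=
  if_pos h

lemma anorm_of_not_forall_norm_apply_le_one {x : FA} (h : ¬ ∀ p, ‖x.1 p‖ ≤ 1) :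
    anorm x = norm1 x :=
  if_neg h

lemma one_lt_anorm {x : FA} (h : ¬ ∀ p, ‖x.1 p‖ ≤ 1) : 1 < anorm x := by
  rw [anorm_of_not_forall_norm_apply_le_one h]
  obtain ⟨p, hp⟩ := not_forall.1 h
  exact (not_le.1 hp).trans_le (norm_apply_le_norm1 x p)

lemma norm_apply_le_one_of_anorm_le_one {x : FA} (h : anorm x ≤ 1) (p : Nat.Primes) :
    ‖x.1 p‖ ≤ 1 := by
  by_contra hp
  exact (one_lt_anorm fun hx => hp (hx p)).not_ge h

lemma norm_apply_le_one_of_anorm_sub_le_one {x y : FA} (h : anorm (x - y) ≤ 1)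
    {p : Nat.Primes} (hy : ‖y.1 p‖ ≤ 1) : ‖x.1 p‖ ≤ 1 := by
  rw [← sub_add_cancel (x.1 p) (y.1 p)]
  exact (IsUltrametricDist.norm_add_le_max _ _).trans
    (max_le (norm_apply_le_one_of_anorm_le_one h p) hy)

lemma norm0_le_anorm (x : FA) : norm0 x ≤ anorm x := by
  unfold anorm
  split_ifs
  exacts [le_rfl, norm0_le_norm1 x]

lemma norm1_le_max_one_anorm (x : FA) : norm1 x ≤ max 1 (anorm x) := by
  by_cases h : ∀ p, ‖x.1 p‖ ≤ 1
  · exact (ciSup_le h).trans (le_max_left _ _)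
  · exact (anorm_of_not_forall_norm_apply_le_one h).ge.trans (le_max_right _ _)

lemma norm_apply_le_mul_anorm (x : FA) (p : Nat.Primes) : ‖x.1 p‖ ≤ p * anorm x := by
  rw [← div_le_iff₀' (primes_cast_pos p)]
  exact (norm_apply_div_le_norm0 x p).trans (norm0_le_anorm x)

lemma anorm_le_iff {x : FA} {ε : ℝ} (hε : ε ≤ 1) :
    anorm x ≤ ε ↔ ∀ p : Nat.Primes, ‖x.1 p‖ ≤ 1 ∧ ‖x.1 p‖ ≤ ε * p := by
  refine ⟨fun h p => ⟨norm_apply_le_one_of_anorm_le_one (h.trans hε) p, ?_⟩, fun h => ?_⟩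
  · rw [mul_comm]
    exact (norm_apply_le_mul_anorm x p).trans (by gcongr)
  · rw [anorm_of_forall_norm_apply_le_one fun p => (h p).1]
    exact ciSup_le fun p => (div_le_iff₀ (primes_cast_pos p)).2 (h p).2

lemma anorm_nonneg (x : FA) : 0 ≤ anorm x := by
  have h := (norm_nonneg _).trans (norm_apply_le_mul_anorm x ⟨2, Nat.prime_two⟩)
  exact (mul_nonneg_iff_of_pos_left (primes_cast_pos _)).1 h

lemma anorm_eq_zero {x : FA} : anorm x = 0 ↔ x = 0 := by
  refine ⟨fun hx => Subtype.ext <| funext fun p => norm_le_zero_iff.1 ?_, fun hx => ?_⟩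
  · simpa [hx] using norm_apply_le_mul_anorm x p
  · subst hx
    exact le_antisymm ((anorm_le_iff zero_le_one).2 fun p => by simp) (anorm_nonneg 0)

lemma anorm_sub_comm (x y : FA) : anorm (x - y) = anorm (y - x) := by
  have h : ∀ p : Nat.Primes, ‖(x - y).1 p‖ = ‖(y - x).1 p‖ := fun p => norm_sub_rev _ _
  simp only [anorm, norm0, norm1, h]

lemma anorm_add_le (x y : FA) : anorm (x + y) ≤ max (anorm x) (anorm y) := by
  by_cases h : ∀ p, ‖(x + y).1 p‖ ≤ 1
  · rw [anorm_of_forall_norm_apply_le_one h]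
    exact (norm0_add_le x y).trans (max_le_max (norm0_le_anorm x) (norm0_le_anorm y))
  rw [anorm_of_not_forall_norm_apply_le_one h]
  have one_lt : 1 < max (anorm x) (anorm y) := by
    by_contra! hle
    exact h fun p => (IsUltrametricDist.norm_add_le_max _ _).trans <| max_le
      (norm_apply_le_one_of_anorm_le_one ((le_max_left _ _).trans hle) p)
      (norm_apply_le_one_of_anorm_le_one ((le_max_right _ _).trans hle) p)
  calc norm1 (x + y) ≤ max (norm1 x) (norm1 y) := norm1_add_le x y
    _ ≤ max (max 1 (anorm x)) (max 1 (anorm y)) :=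
      max_le_max (norm1_le_max_one_anorm x) (norm1_le_max_one_anorm y)
    _ ≤ max (anorm x) (anorm y) :=
      max_le (max_le one_lt.le (le_max_left _ _)) (max_le one_lt.le (le_max_right _ _))

lemma anorm_sub_le_max (x y z : FA) : anorm (x - z) ≤ max (anorm (x - y)) (anorm (y - z)) := by
  simpa using anorm_add_le (x - y) (y - z)

lemma anorm_le_of_tendsto {ι : Type*} {l : Filter ι} [l.NeBot] {v : ι → FA} {x : FA} {ε : ℝ}
    (hε : ε ≤ 1) (hv : ∀ p, Tendsto (fun i => (v i).1 p) l (𝓝 (x.1 p)))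
    (h : ∀ᶠ i in l, anorm (v i) ≤ ε) : anorm x ≤ ε := by
  refine (anorm_le_iff hε).2 fun p => ⟨?_, ?_⟩
  · exact le_of_tendsto (hv p).norm (h.mono fun i hi => ((anorm_le_iff hε).1 hi p).1)
  · exact le_of_tendsto (hv p).norm (h.mono fun i hi => ((anorm_le_iff hε).1 hi p).2)

noncomputable abbrev adeleMetric : MetricSpace FA where
  dist x y := anorm (x - y)
  dist_self x := by rw [sub_self, anorm_eq_zero]
  dist_comm := anorm_sub_comm
  dist_triangle x y z := (anorm_sub_le_max x y z).trans
    (max_le_add_of_nonneg (anorm_nonneg _) (anorm_nonneg _))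
  eq_of_dist_eq_zero h := sub_eq_zero.1 (anorm_eq_zero.1 h)

section AdeleMetric

/- `FA` inherits the subspace topology of `Π p, ℚ_[p]`; here we replace it by the metric `ρ`. -/
attribute [-instance] instTopologicalSpaceSubtype instUniformSpaceSubtype
attribute [local instance] adeleMetric

lemma lipschitzWith_apply (p : Nat.Primes) : LipschitzWith (p : ℕ) fun x : FA => x.1 p :=
  LipschitzWith.of_dist_le_mul fun x y => by
    rw [dist_eq_norm, NNReal.coe_natCast]
    exact norm_apply_le_mul_anorm (x - y) p

lemma isOpen_setOf_forall_not_mem_norm_apply_le_one (S : Finset Nat.Primes) :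
    IsOpen {x : FA | ∀ p ∉ S, ‖x.1 p‖ ≤ 1} :=
  Metric.isOpen_iff.2 fun _ hx => ⟨1, one_pos, fun _ hy p hp =>
    norm_apply_le_one_of_anorm_sub_le_one (Metric.mem_ball.1 hy).le (hx p hp)⟩

lemma ball_mem_nhds_restrictedTop (x : FA) {ε : ℝ} (hε : 0 < ε) :
    Metric.ball x ε ∈ @nhds FA restrictedTop x := by
  obtain ⟨δ, hδ, hδ1, hδε⟩ : ∃ δ, 0 < δ ∧ δ ≤ 1 ∧ δ < ε :=
    ⟨min ε 1 / 2, by positivity, by linarith [min_le_right ε 1], by linarith [min_le_left ε 1]⟩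
  have hev : ∀ᶠ p : Nat.Primes in cofinite, ‖x.1 p‖ ≤ 1 ∧ 1 ≤ δ * p :=
    (mem_adeleSubring.1 x.2).and <|
      (tendsto_primes_cast_cofinite.eventually_ge_atTop (1 / δ)).mono fun p hp => by
        rwa [div_le_iff₀' hδ] at hp
  set S := (eventually_cofinite.1 hev).toFinset
  have hS : ∀ p ∉ S, ‖x.1 p‖ ≤ 1 ∧ 1 ≤ δ * p := fun p hp => by simpa [S] using hp
  have hr : ∀ p : Nat.Primes, 0 < min 1 (δ * p) := fun p =>
    lt_min one_pos (mul_pos hδ (primes_cast_pos p))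
  have hopen : IsOpen[restrictedTop]
      {y : FA | (∀ p ∈ S, y.1 p ∈ Metric.ball (x.1 p) (min 1 (δ * p))) ∧ ∀ p ∉ S, ‖y.1 p‖ ≤ 1} :=
    TopologicalSpace.isOpen_generateFrom_of_mem ⟨S, _, fun p => Metric.isOpen_ball, rfl⟩
  refine Filter.mem_of_superset (@IsOpen.mem_nhds _ restrictedTop _ _ hopen
    ⟨fun p _ => Metric.mem_ball_self (hr p), fun p hp => (hS p hp).1⟩) fun y hy => ?_
  have hyx : anorm (y - x) ≤ δ := (anorm_le_iff hδ1).2 fun p => by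
    by_cases hp : p ∈ S
    · exact (lt_min_iff.1 (mem_ball_iff_norm.1 (hy.1 p hp))).imp le_of_lt le_of_lt
    · have h : ‖y.1 p - x.1 p‖ ≤ 1 := by
        rw [sub_eq_add_neg]
        exact (IsUltrametricDist.norm_add_le_max _ _).trans
          (max_le (hy.2 p hp) ((norm_neg _).trans_le (hS p hp).1))
      exact ⟨h, h.trans (hS p hp).2⟩
  exact Metric.mem_ball.2 (hyx.trans_lt hδε)

theorem adeleMetric_topology : adeleMetric.toUniformSpace.toTopologicalSpace = restrictedTop := by
  refine le_antisymm (le_generateFrom ?_) ((le_iff_nhds _ _).2 fun x =>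
    Metric.nhds_basis_ball.ge_iff.2 fun ε hε => ball_mem_nhds_restrictedTop x hε)
  rintro _ ⟨S, U, hU, rfl⟩
  have hcyl : IsOpen (⋂ p ∈ S, (fun x : FA => x.1 p) ⁻¹' U p) :=
    isOpen_biInter_finset fun p _ => (hU p).preimage (lipschitzWith_apply p).continuous
  convert hcyl.inter (isOpen_setOf_forall_not_mem_norm_apply_le_one S) using 1
  ext x
  simp

theorem completeSpace_adeleMetric : CompleteSpace FA := by
  refine Metric.complete_of_cauchySeq_tendsto fun u hu => ?_
  choose Y hY using fun p : Nat.Primes =>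
    cauchySeq_tendsto_of_complete ((lipschitzWith_apply p).uniformContinuous.comp_cauchySeq hu)
  obtain ⟨N, hN⟩ := Metric.cauchySeq_iff'.1 hu 1 one_pos
  have hYmem : Y ∈ adeleSubring := by
    filter_upwards [mem_adeleSubring.1 (u N).2] with p hp
    exact le_of_tendsto (hY p).norm <| eventually_atTop.2
      ⟨N, fun n hn => norm_apply_le_one_of_anorm_sub_le_one (hN n hn).le hp⟩
  refine ⟨⟨Y, hYmem⟩, Metric.tendsto_atTop.2 fun ε hε => ?_⟩
  obtain ⟨δ, hδ, hδ1, hδε⟩ : ∃ δ, 0 < δ ∧ δ ≤ 1 ∧ δ < ε :=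
    ⟨min ε 1 / 2, by positivity, by linarith [min_le_right ε 1], by linarith [min_le_left ε 1]⟩
  obtain ⟨M, hM⟩ := Metric.cauchySeq_iff.1 hu δ hδ
  refine ⟨M, fun n hn => ?_⟩
  have h : anorm (u n - ⟨Y, hYmem⟩) ≤ δ :=
    anorm_le_of_tendsto (l := atTop) (v := fun m => u n - u m) hδ1
      (fun p => tendsto_const_nhds.sub (hY p))
      (eventually_atTop.2 ⟨M, fun m hm => (hM n hn m hm).le⟩)
  exact h.trans_lt hδε

end AdeleMetric

/-- The adelic metric `ρ(x,y) = ‖x − y‖` induces the restricted product topology on `𝔸_f`,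
and `(𝔸_f, ρ)` is a complete non-Archimedean metric space. -/
theorem stmt_7 :
    ∃ m : MetricSpace FA,
      (∀ x y : FA, m.toDist.dist x y = anorm (x - y)) ∧
      m.toUniformSpace.toTopologicalSpace = restrictedTop ∧
      (@CompleteSpace FA m.toUniformSpace) ∧
      (∀ x y z : FA, m.toDist.dist x z ≤ max (m.toDist.dist x y) (m.toDist.dist y z)) :=
  ⟨adeleMetric, fun _ _ => rfl, adeleMetric_topology, completeSpace_adeleMetric, anorm_sub_le_max⟩
end

section
/- If f : 𝔸_f → ℝ is an integrable radial non-increasing function (f(ξ) ≥ f(ζ) whenever ‖ξ‖ ≤ ‖ζ‖), then its inverse Fourier transform f̌(x) = ∫_{𝔸_f} χ(ξ·x) f(ξ) dξ is non-negative for every x ∈ 𝔸_f. -/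
open Filter MeasureTheory
open scoped Classical

noncomputable section

open Filter MeasureTheory

instance : TopologicalSpace FA := restrictedTop
instance : MeasurableSpace FA := borel FA
instance : BorelSpace FA := ⟨rfl⟩

/-- The unit ball `∏_p ℤ_p` inside `𝔸_f`. -/
def unitBall : Set FA := {x : FA | ∀ p : Nat.Primes, ‖x.1 p‖ ≤ 1}

/-- The fractional part `{x}_p` of a `p`-adic number (a rational in `[0,1)`). -/
def padicFrac {p : ℕ} [Fact p.Prime] (x : ℚ_[p]) : ℚ :=
  if h : ‖(p : ℚ_[p]) ^ (-x.valuation).toNat * x‖ ≤ 1 then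
    ((PadicInt.appr (⟨_, h⟩ : ℤ_[p]) (-x.valuation).toNat : ℕ) : ℚ) / (p : ℚ) ^ (-x.valuation).toNat
  else 0

/-- The standard additive character of `𝔸_f`: `χ(x) = ∏_p exp(−2πi {x_p}_p)`. -/
def achar (x : FA) : ℂ :=
  ∏ᶠ p : Nat.Primes,
    Complex.exp (-(2 * Real.pi * (padicFrac (x.1 p) : ℝ) : ℝ) * Complex.I)

end

/-!
Because `anorm` is ultrametric and `f` is radial and non-increasing, every superlevel set
`{t ≤ f}` is closed under addition and negation. By translation invariance, the integral of the
character `ξ ↦ χ(ξ x)` over such a set is either its measure or `0`, so in both cases it is a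
non-negative real number. The layer-cake formula `f = ∫_{t > 0} 1_{t ≤ f} dt` and Fubini then
write `f̌(x)` as an integral of these numbers over `t > 0`. The function `f` is itself
non-negative: if `f ξ₀ < 0`, then `f ≤ f ξ₀` off a ball, and the complement of a ball contains
infinitely many disjoint translates of the unit ball, which contradicts integrability.
-/

open MeasureTheory Set Filter Topology Function

section LayerCake

variable {α E : Type*} [MeasurableSpace α] [NormedAddCommGroup E]

lemma setIntegral_Ioi_zero_indicator_Iic [NormedSpace ℝ E] [CompleteSpace E] {y : ℝ}
    (hy : 0 ≤ y) (c : E) : ∫ t in Ioi 0, (Iic y).indicator (fun _ => c) t = y • c := by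
  rw [setIntegral_indicator measurableSet_Iic, Ioi_inter_Iic, setIntegral_const,
    Real.volume_real_Ioc_of_le hy, sub_zero]

lemma integrableOn_Ioi_zero_indicator_Iic (y : ℝ) (c : E) :
    IntegrableOn ((Iic y).indicator fun _ => c) (Ioi 0) := by
  refine (integrable_indicator_iff measurableSet_Iic).2 (integrableOn_const ?_)
  rw [Measure.restrict_apply measurableSet_Iic, Iic_inter_Ioi]
  exact measure_Ioc_lt_top.ne

lemma integrable_indicator_Iic_prod {μ : Measure α} {f : α → ℝ} {φ : α → E}
    (hf : Measurable f) (hf0 : 0 ≤ f) (hfi : Integrable f μ) (hφ : StronglyMeasurable φ)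
    {C : ℝ} (hφC : ∀ x, ‖φ x‖ ≤ C) :
    Integrable (uncurry fun x t => (Iic (f x)).indicator (fun _ => φ x) t)
      (μ.prod (volume.restrict (Ioi 0))) := by
  have hmeas : AEStronglyMeasurable (uncurry fun x t => (Iic (f x)).indicator (fun _ => φ x) t)
      (μ.prod (volume.restrict (Ioi 0))) := by
    have hF : (uncurry fun x t => (Iic (f x)).indicator (fun _ => φ x) t)
        = {z : α × ℝ | z.2 ≤ f z.1}.indicator (φ ∘ Prod.fst) := by
      ext ⟨x, t⟩
      simp [indicator_apply]
    rw [hF]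
    exact (hφ.comp_measurable measurable_fst).aestronglyMeasurable.indicator
      (measurableSet_le measurable_snd (hf.comp measurable_fst))
  refine (integrable_prod_iff hmeas).2 ⟨ae_of_all _ fun x => ?_, ?_⟩
  · exact integrableOn_Ioi_zero_indicator_Iic (f x) (φ x)
  · have hnorm (x : α) :
        ∫ t in Ioi 0, ‖(Iic (f x)).indicator (fun _ => φ x) t‖ = f x * ‖φ x‖ := by
      simp_rw [norm_indicator_eq_indicator_norm]
      exact setIntegral_Ioi_zero_indicator_Iic (hf0 x) _
    simp only [uncurry_apply_pair, hnorm]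
    exact hfi.mul_bdd hφ.norm.aestronglyMeasurable (ae_of_all _ fun x => by simpa using hφC x)

variable [NormedSpace ℝ E] [CompleteSpace E]

theorem integral_smul_eq_integral_setIntegral_superlevel {μ : Measure α} [SFinite μ]
    {f : α → ℝ} {φ : α → E} (hf : Measurable f) (hf0 : 0 ≤ f) (hfi : Integrable f μ)
    (hφ : StronglyMeasurable φ) {C : ℝ} (hφC : ∀ x, ‖φ x‖ ≤ C) :
    ∫ x, f x • φ x ∂μ = ∫ t in Ioi 0, (∫ x in {x | t ≤ f x}, φ x ∂μ) := by
  calc ∫ x, f x • φ x ∂μ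
      = ∫ x, (∫ t in Ioi 0, (Iic (f x)).indicator (fun _ => φ x) t) ∂μ := by
        simp_rw [setIntegral_Ioi_zero_indicator_Iic (hf0 _)]
    _ = ∫ t in Ioi 0, (∫ x, (Iic (f x)).indicator (fun _ => φ x) t ∂μ) :=
        integral_integral_swap (integrable_indicator_Iic_prod hf hf0 hfi hφ hφC)
    _ = ∫ t in Ioi 0, (∫ x in {x | t ≤ f x}, φ x ∂μ) := by
        congr 1 with t
        rw [← integral_indicator (measurableSet_le measurable_const hf)]
        simp [indicator_apply]

theorem integral_smul_nonneg_of_setIntegral_superlevel_nonneg [PartialOrder E]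
    [IsOrderedAddMonoid E] [IsOrderedModule ℝ E] [ClosedIciTopology E] {μ : Measure α}
    {f : α → ℝ} {φ : α → E} (hf : Measurable f) (hf0 : 0 ≤ f) (hfi : Integrable f μ)
    (hφ : StronglyMeasurable φ) {C : ℝ} (hφC : ∀ x, ‖φ x‖ ≤ C)
    (hlevel : ∀ t > 0, 0 ≤ ∫ x in {x | t ≤ f x}, φ x ∂μ) :
    0 ≤ ∫ x, f x • φ x ∂μ := by
  -- Fubini needs σ-finiteness, so we pass to a σ-finite set off which `f` vanishes.
  obtain ⟨T, -, hfT, hσ⟩ :=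
    ((memLp_one_iff_integrable.2 hfi).finStronglyMeasurable_of_stronglyMeasurable
      hf.stronglyMeasurable one_ne_zero ENNReal.one_ne_top).exists_set_sigmaFinite
  have hlevelT {t : ℝ} (ht : 0 < t) : {x | t ≤ f x} ⊆ T := fun x hx => by
    by_contra hxT
    exact (hfT x hxT ▸ ht.trans_le hx).false
  rw [← setIntegral_eq_integral_of_forall_compl_eq_zero (s := T) fun x hx => by simp [hfT x hx],
    integral_smul_eq_integral_setIntegral_superlevel (μ := μ.restrict T) hf hf0 hfi.restrict hφ hφC]
  refine integral_nonneg_of_ae ((ae_restrict_iff' measurableSet_Ioi).2 (ae_of_all _ fun t ht => ?_))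
  simpa only [Pi.zero_apply, Measure.restrict_restrict_of_subset (hlevelT ht)] using hlevel t ht

end LayerCake

section CharacterIntegral

variable {G : Type*} [AddGroup G] [MeasurableSpace G] [MeasurableAdd G] {μ : Measure G}
  [μ.IsAddLeftInvariant] {S : Set G}

theorem setIntegral_addChar_eq_zero {𝕜 : Type*} [RCLike 𝕜] (ψ : AddChar G 𝕜)
    (hS : MeasurableSet S) (hadd : ∀ a ∈ S, ∀ b ∈ S, a + b ∈ S) (hneg : ∀ a ∈ S, -a ∈ S)
    {a : G} (ha : a ∈ S) (hψa : ψ a ≠ 1) :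
    ∫ ξ in S, ψ ξ ∂μ = 0 := by
  have hshift (ξ : G) : S.indicator ψ (a + ξ) = ψ a * S.indicator ψ ξ := by
    have hmem : a + ξ ∈ S ↔ ξ ∈ S :=
      ⟨fun h => by simpa using hadd _ (hneg a ha) _ h, hadd a ha ξ⟩
    by_cases hξ : ξ ∈ S
    · simp [indicator_of_mem hξ, indicator_of_mem (hmem.2 hξ), AddChar.map_add_eq_mul]
    · simp [indicator_of_notMem hξ, indicator_of_notMem (mt hmem.1 hξ)]
  have hfix : ∫ ξ in S, ψ ξ ∂μ = ψ a * ∫ ξ in S, ψ ξ ∂μ := by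
    rw [← integral_indicator hS, ← integral_const_mul, ← integral_add_left_eq_self _ a]
    simp_rw [hshift]
  have : (ψ a - 1) * ∫ ξ in S, ψ ξ ∂μ = 0 := by rw [sub_mul, one_mul, ← hfix, sub_self]
  exact (mul_eq_zero.1 this).resolve_left (sub_ne_zero.2 hψa)

open ComplexOrder in
theorem setIntegral_addChar_nonneg (ψ : AddChar G ℂ) (hS : MeasurableSet S)
    (hadd : ∀ a ∈ S, ∀ b ∈ S, a + b ∈ S) (hneg : ∀ a ∈ S, -a ∈ S) :
    0 ≤ ∫ ξ in S, ψ ξ ∂μ := by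
  by_cases htriv : ∀ a ∈ S, ψ a = 1
  · rw [setIntegral_congr_fun hS htriv, setIntegral_const, Complex.real_smul, mul_one]
    exact Complex.zero_le_real.2 measureReal_nonneg
  · obtain ⟨a, ha, hψa⟩ := not_forall₂.1 htriv
    rw [setIntegral_addChar_eq_zero ψ hS hadd hneg ha hψa]

end CharacterIntegral

namespace Padic
variable {p : ℕ} [hp : Fact p.Prime]

lemma norm_add_le_one_iff {a : ℚ_[p]} (ha : ‖a‖ ≤ 1) (y : ℚ_[p]) : ‖a + y‖ ≤ 1 ↔ ‖y‖ ≤ 1 :=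
  ⟨fun h => by simpa using (nonarchimedean (-a) (a + y)).trans (max_le (by simpa) h),
    fun h => (nonarchimedean _ _).trans (max_le ha h)⟩

lemma norm_pow_neg_valuation_mul_le_one (x : ℚ_[p]) :
    ‖(p : ℚ_[p]) ^ (-x.valuation).toNat * x‖ ≤ 1 := by
  rcases eq_or_ne x 0 with rfl | hx
  · simp
  rw [norm_mul, norm_pow, norm_p, norm_eq_zpow_neg_valuation hx, inv_pow, ← zpow_natCast,
    ← zpow_neg, ← zpow_add₀ (by exact_mod_cast hp.1.ne_zero)]
  exact zpow_le_one_of_nonpos₀ (by exact_mod_cast hp.1.one_le) (by omega)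

lemma padicFrac_eq (x : ℚ_[p]) :
    padicFrac x = (PadicInt.appr ⟨_, norm_pow_neg_valuation_mul_le_one x⟩ (-x.valuation).toNat : ℚ)
      / (p : ℚ) ^ (-x.valuation).toNat :=
  dif_pos _

lemma padicFrac_of_norm_le_one {x : ℚ_[p]} (hx : ‖x‖ ≤ 1) : padicFrac x = 0 := by
  have hn : (-x.valuation).toNat = 0 :=
    Int.toNat_eq_zero.2 (by linarith [(norm_le_one_iff_val_nonneg x).1 hx])
  simp [padicFrac_eq, hn, PadicInt.appr]

lemma exists_padicFrac_mul_pow_eq_int (x : ℚ_[p]) :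
    ∃ z : ℤ, padicFrac x * (p : ℚ) ^ (-x.valuation).toNat = z :=
  ⟨PadicInt.appr _ (-x.valuation).toNat, by
    rw [padicFrac_eq, div_mul_cancel₀ _ (pow_ne_zero _ (by exact_mod_cast hp.1.ne_zero))]; rfl⟩

lemma norm_sub_appr_div_pow_le_one {z : ℤ_[p]} {n : ℕ} {x : ℚ_[p]}
    (hz : (z : ℚ_[p]) = (p : ℚ_[p]) ^ n * x) :
    ‖x - (PadicInt.appr z n : ℚ_[p]) / (p : ℚ_[p]) ^ n‖ ≤ 1 := by
  obtain ⟨u, hu⟩ := Ideal.mem_span_singleton'.1 (PadicInt.appr_spec n z)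
  have hu' : (u : ℚ_[p]) * (p : ℚ_[p]) ^ n = (p : ℚ_[p]) ^ n * x - PadicInt.appr z n := by
    rw [← hz]
    simpa using congrArg ((↑) : ℤ_[p] → ℚ_[p]) hu
  have hpn : (p : ℚ_[p]) ^ n ≠ 0 := pow_ne_zero _ (by exact_mod_cast hp.1.ne_zero)
  have : x - (PadicInt.appr z n : ℚ_[p]) / (p : ℚ_[p]) ^ n = u := by
    field_simp
    linear_combination -hu'
  rw [this]
  exact u.2

lemma norm_sub_padicFrac_le_one (x : ℚ_[p]) : ‖x - (padicFrac x : ℚ_[p])‖ ≤ 1 := by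
  rw [padicFrac_eq]
  push_cast
  exact norm_sub_appr_div_pow_le_one rfl

lemma _root_.Rat.exists_int_eq_of_mul_pow_eq_int {q : ℚ} {N : ℕ} {z : ℤ}
    (hz : q * (p : ℚ) ^ N = z) (hq : ‖(q : ℚ_[p])‖ ≤ 1) : ∃ m : ℤ, q = m := by
  have hdvd : (p : ℤ) ^ N ∣ z := by
    rw [← norm_int_le_pow_iff_dvd, ← Rat.cast_intCast, ← hz]
    push_cast
    rw [norm_mul, norm_pow, norm_p, inv_pow, zpow_neg, zpow_natCast]
    exact mul_le_of_le_one_left (by positivity) hq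
  obtain ⟨m, rfl⟩ := hdvd
  refine ⟨m, mul_right_cancel₀ (pow_ne_zero N (by exact_mod_cast hp.1.ne_zero : (p : ℚ) ≠ 0)) ?_⟩
  rw [hz]
  push_cast
  ring

lemma exists_padicFrac_add_sub_eq_int (a b : ℚ_[p]) :
    ∃ m : ℤ, padicFrac a + padicFrac b - padicFrac (a + b) = m := by
  obtain ⟨za, hza⟩ := exists_padicFrac_mul_pow_eq_int a
  obtain ⟨zb, hzb⟩ := exists_padicFrac_mul_pow_eq_int b
  obtain ⟨zc, hzc⟩ := exists_padicFrac_mul_pow_eq_int (a + b)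
  set na := (-a.valuation).toNat
  set nb := (-b.valuation).toNat
  set nc := (-(a + b).valuation).toNat
  -- The difference has a `p`-power denominator and is `p`-adically integral.
  refine Rat.exists_int_eq_of_mul_pow_eq_int (p := p) (N := na + nb + nc)
    (z := za * p ^ (nb + nc) + zb * p ^ (na + nc) - zc * p ^ (na + nb)) ?_ ?_
  · push_cast
    linear_combination (p : ℚ) ^ (nb + nc) * hza + (p : ℚ) ^ (na + nc) * hzb
      - (p : ℚ) ^ (na + nb) * hzc
  · have : ((padicFrac a + padicFrac b - padicFrac (a + b) : ℚ) : ℚ_[p])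
        = -(a - padicFrac a) + -(b - padicFrac b) + (a + b - padicFrac (a + b)) := by
      push_cast; ring
    rw [this]
    refine (nonarchimedean _ _).trans (max_le ((nonarchimedean _ _).trans (max_le ?_ ?_)) ?_)
    · rw [norm_neg]; exact norm_sub_padicFrac_le_one a
    · rw [norm_neg]; exact norm_sub_padicFrac_le_one b
    · exact norm_sub_padicFrac_le_one (a + b)

end Padic

lemma Complex.exp_neg_two_pi_mul_I_eq_of_sub_eq_int {r s : ℝ} {m : ℤ} (h : r - s = m) :
    Complex.exp (-(2 * Real.pi * r : ℝ) * Complex.I)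
      = Complex.exp (-(2 * Real.pi * s : ℝ) * Complex.I) := by
  rw [show r = s + m by linarith]
  push_cast
  rw [show -(2 * Real.pi * (s + m) : ℂ) * Complex.I
      = -(2 * Real.pi * s) * Complex.I + (-m : ℤ) * (2 * Real.pi * Complex.I) by push_cast; ring,
    Complex.exp_add, Complex.exp_int_mul_two_pi_mul_I, mul_one]

open Padic in
noncomputable def padicAddChar (p : ℕ) [Fact p.Prime] : AddChar ℚ_[p] ℂ where
  toFun y := Complex.exp (-(2 * Real.pi * (padicFrac y : ℝ) : ℝ) * Complex.I)
  map_zero_eq_one' := by simp [padicFrac_of_norm_le_one]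
  map_add_eq_mul' a b := by
    obtain ⟨m, hm⟩ := exists_padicFrac_add_sub_eq_int a b
    rw [← Complex.exp_add, ← Complex.exp_neg_two_pi_mul_I_eq_of_sub_eq_int
      (r := padicFrac a + padicFrac b) (m := m) (by exact_mod_cast hm)]
    push_cast
    congr 1
    ring

lemma padicAddChar_eq_one {p : ℕ} [Fact p.Prime] {y : ℚ_[p]} (hy : ‖y‖ ≤ 1) :
    padicAddChar p y = 1 := by
  simp [padicAddChar, Padic.padicFrac_of_norm_le_one hy]

lemma norm_padicAddChar {p : ℕ} [Fact p.Prime] (y : ℚ_[p]) : ‖padicAddChar p y‖ = 1 := by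
  simpa [padicAddChar] using Complex.norm_exp_ofReal_mul_I (-(2 * Real.pi * (padicFrac y : ℝ)))

namespace FA

lemma finite_setOf_one_lt_norm (x : FA) : {p | 1 < ‖x.1 p‖}.Finite := by
  simpa only [not_le] using Filter.eventually_cofinite.1 x.2

lemma bddAbove_range_norm (x : FA) : BddAbove (range fun p => ‖x.1 p‖) := by
  refine (((finite_setOf_one_lt_norm x).image fun p => ‖x.1 p‖).bddAbove.union
    (bddAbove_Iic (a := 1))).mono ?_
  rintro _ ⟨p, rfl⟩
  by_cases h : 1 < ‖x.1 p‖
  · exact Or.inl ⟨p, h, rfl⟩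
  · exact Or.inr (not_lt.1 h)

lemma anorm_of_mem_unitBall {x : FA} (hx : x ∈ unitBall) : anorm x = norm0 x := if_pos hx

lemma anorm_of_notMem_unitBall {x : FA} (hx : x ∉ unitBall) : anorm x = norm1 x := if_neg hx

lemma norm_le_norm1 (x : FA) (p : Nat.Primes) : ‖x.1 p‖ ≤ norm1 x :=
  le_ciSup (bddAbove_range_norm x) p

lemma norm_div_le_norm0 {x : FA} (hx : x ∈ unitBall) (p : Nat.Primes) :
    ‖x.1 p‖ / p ≤ norm0 x :=
  le_ciSup (f := fun p : Nat.Primes => ‖x.1 p‖ / p) ⟨1, by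
    rintro _ ⟨q, rfl⟩
    exact (div_le_self (norm_nonneg _) (by exact_mod_cast q.2.one_le)).trans (hx q)⟩ p

lemma anorm_nonneg (x : FA) : 0 ≤ anorm x := by
  unfold anorm norm0 norm1
  split_ifs <;> exact Real.iSup_nonneg fun p => by positivity

lemma one_lt_anorm_of_notMem_unitBall {x : FA} (hx : x ∉ unitBall) : 1 < anorm x := by
  obtain ⟨p, hp⟩ := not_forall.1 hx
  rw [anorm_of_notMem_unitBall hx]
  exact (not_le.1 hp).trans_le (norm_le_norm1 x p)

noncomputable def anormRadius (c : ℝ) (p : Nat.Primes) : ℝ := if 1 ≤ c then c else min 1 (c * p)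

lemma anorm_le_iff {x : FA} {c : ℝ} : anorm x ≤ c ↔ ∀ p, ‖x.1 p‖ ≤ anormRadius c p := by
  have hp (p : Nat.Primes) : (0 : ℝ) < p := by exact_mod_cast p.2.pos
  unfold anormRadius
  split_ifs with hc
  · by_cases hx : x ∈ unitBall
    · rw [anorm_of_mem_unitBall hx]
      refine ⟨fun _ p => (hx p).trans hc, fun _ => ciSup_le fun p => ?_⟩
      exact (div_le_self (norm_nonneg _) (by exact_mod_cast p.2.one_le)).trans ((hx p).trans hc)
    · rw [anorm_of_notMem_unitBall hx]
      exact ⟨fun h p => (norm_le_norm1 x p).trans h, ciSup_le⟩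
  · constructor
    · intro h
      have hx : x ∈ unitBall := by
        by_contra hx
        linarith [one_lt_anorm_of_notMem_unitBall hx]
      rw [anorm_of_mem_unitBall hx] at h
      exact fun p => le_min (hx p) ((div_le_iff₀ (hp p)).1 ((norm_div_le_norm0 hx p).trans h))
    · intro h
      have hx : x ∈ unitBall := fun p => (h p).trans (min_le_left _ _)
      rw [anorm_of_mem_unitBall hx]
      exact ciSup_le fun p => (div_le_iff₀ (hp p)).2 ((h p).trans (min_le_right _ _))

lemma anorm_add_le (x y : FA) : anorm (x + y) ≤ max (anorm x) (anorm y) :=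
  anorm_le_iff.2 fun p => (Padic.nonarchimedean _ _).trans (max_le
    (anorm_le_iff.1 (le_max_left _ _) p) (anorm_le_iff.1 (le_max_right _ _) p))

lemma anorm_neg (x : FA) : anorm (-x) = anorm x := by
  have (y : FA) : anorm (-y) ≤ anorm y :=
    anorm_le_iff.2 fun p => (norm_neg (y.1 p)).trans_le (anorm_le_iff.1 le_rfl p)
  exact le_antisymm (this x) (by simpa using this (-x))

lemma norm_le_max_one_anorm (x : FA) (p : Nat.Primes) : ‖x.1 p‖ ≤ max 1 (anorm x) := by
  simpa [anormRadius] using anorm_le_iff.1 (le_max_right 1 (anorm x)) p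

lemma isOpen_box (S : Finset Nat.Primes) {U : ∀ p : Nat.Primes, Set ℚ_[p.1]}
    (hU : ∀ p, IsOpen (U p)) :
    IsOpen {x : FA | (∀ p ∈ S, x.1 p ∈ U p) ∧ ∀ p ∉ S, ‖x.1 p‖ ≤ 1} :=
  TopologicalSpace.isOpen_generateFrom_of_mem ⟨S, U, hU, rfl⟩

lemma continuous_const_add (a : FA) : Continuous (a + ·) := by
  refine continuous_generateFrom_iff.2 ?_
  rintro _ ⟨S, U, hU, rfl⟩
  set T := S ∪ (finite_setOf_one_lt_norm a).toFinset
  let V : ∀ p : Nat.Primes, Set ℚ_[p.1] := fun p =>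
    (a.1 p + ·) ⁻¹' (if p ∈ S then U p else Metric.closedBall 0 1)
  have hV (p : Nat.Primes) : IsOpen (V p) := by
    refine IsOpen.preimage (_root_.continuous_const_add _) ?_
    split_ifs
    · exact hU p
    · exact IsUltrametricDist.isOpen_closedBall _ one_ne_zero
  convert isOpen_box T hV using 1
  ext x
  have ha {p : Nat.Primes} (hp : p ∉ T) : ‖a.1 p‖ ≤ 1 := by
    simpa [T] using fun h => hp (Finset.mem_union_right _ h)
  have hST {p : Nat.Primes} (hp : p ∉ T) : p ∉ S := fun h => hp (Finset.mem_union_left _ h)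
  simp only [mem_preimage, mem_ofPred_eq]
  constructor
  · rintro ⟨h1, h2⟩
    refine ⟨fun p _ => ?_, fun p hp => (Padic.norm_add_le_one_iff (ha hp) _).1 (h2 p (hST hp))⟩
    by_cases hpS : p ∈ S
    · simpa [V, hpS] using h1 p hpS
    · simpa [V, hpS, dist_eq_norm, add_comm] using h2 p hpS
  · rintro ⟨h1, h2⟩
    refine ⟨fun p hpS => by simpa [V, hpS] using h1 p (Finset.mem_union_left _ hpS),
      fun p hpS => ?_⟩
    by_cases hpT : p ∈ T
    · simpa [V, hpS, dist_eq_norm, add_comm] using h1 p hpT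
    · exact (Padic.norm_add_le_one_iff (ha hpT) _).2 (h2 p hpT)

instance : MeasurableAdd FA :=
  ⟨fun a => (continuous_const_add a).measurable,
    fun a => by simpa only [add_comm] using (continuous_const_add a).measurable⟩

lemma setOf_forall_norm_le_mem_nhds_zero {r : Nat.Primes → ℝ} (hr : ∀ p, 0 < r p)
    (hfin : {p | r p < 1}.Finite) : {x : FA | ∀ p, ‖x.1 p‖ ≤ r p} ∈ 𝓝 0 := by
  refine mem_of_superset ((isOpen_box hfin.toFinset fun p =>
    IsUltrametricDist.isOpen_closedBall (0 : ℚ_[p.1]) (hr p).ne').mem_nhds ?_) ?_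
  · exact ⟨fun p _ => by simpa using (hr p).le, fun p _ => by simp⟩
  · rintro x ⟨h1, h2⟩ p
    by_cases hp : p ∈ hfin.toFinset
    · simpa using h1 p hp
    · exact (h2 p hp).trans (not_lt.1 (by simpa using hp))

lemma isOpen_of_mem_nhds_zero {S : Set FA} (h0 : S ∈ 𝓝 0)
    (hadd : ∀ a ∈ S, ∀ b ∈ S, a + b ∈ S) : IsOpen S := by
  refine isOpen_iff_mem_nhds.2 fun a ha => ?_
  have : (-a + ·) ⁻¹' S ∈ 𝓝 a :=
    (continuous_const_add (-a)).continuousAt.preimage_mem_nhds (by simpa using h0)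
  exact mem_of_superset this fun y hy => by simpa using hadd a ha _ hy

lemma anormRadius_pos {c : ℝ} (hc : 0 < c) (p : Nat.Primes) : 0 < anormRadius c p := by
  have : (0 : ℝ) < p := by exact_mod_cast p.2.pos
  unfold anormRadius
  split_ifs
  · exact hc
  · exact lt_min one_pos (mul_pos hc this)

lemma finite_setOf_anormRadius_lt_one {c : ℝ} (hc : 0 < c) :
    {p | anormRadius c p < 1}.Finite := by
  refine ((Set.finite_le_nat ⌊1 / c⌋₊).preimage Subtype.val_injective.injOn).subset fun p hp => ?_
  simp only [anormRadius] at hp ⊢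
  split_ifs at hp with h
  · exact absurd hp (not_lt.2 h)
  · have : c * p < 1 := (min_lt_iff.1 hp).resolve_left (lt_irrefl 1)
    exact Nat.le_floor ((le_div_iff₀ hc).2 (by linarith))

lemma isOpen_setOf_anorm_le {c : ℝ} (hc : 0 < c) : IsOpen {x : FA | anorm x ≤ c} := by
  refine isOpen_of_mem_nhds_zero ?_ fun a ha b hb => (anorm_add_le a b).trans (max_le ha hb)
  simpa only [anorm_le_iff] using
    setOf_forall_norm_le_mem_nhds_zero (anormRadius_pos hc) (finite_setOf_anormRadius_lt_one hc)

lemma isOpen_setOf_anorm_lt (c : ℝ) : IsOpen {x : FA | anorm x < c} := by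
  refine isOpen_iff_mem_nhds.2 fun x hx => ?_
  obtain ⟨r, hxr, hrc⟩ := exists_between (show anorm x < c from hx)
  exact mem_of_superset ((isOpen_setOf_anorm_le ((anorm_nonneg x).trans_lt hxr)).mem_nhds
    hxr.le) fun y hy => lt_of_le_of_lt hy hrc

lemma measurable_anorm : Measurable anorm :=
  measurable_of_Iio fun c => (isOpen_setOf_anorm_lt c).measurableSet

def IsAnormLowerSet (D : Set FA) : Prop := ∀ ⦃ξ ζ⦄, anorm ξ ≤ anorm ζ → ζ ∈ D → ξ ∈ D

lemma IsAnormLowerSet.measurableSet {D : Set FA} (hD : IsAnormLowerSet D) : MeasurableSet D := by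
  have hL : IsLowerSet {r : ℝ | ∃ ζ ∈ D, r ≤ anorm ζ} :=
    fun _ _ hba ⟨ζ, hζ, h⟩ => ⟨ζ, hζ, hba.trans h⟩
  have : D = anorm ⁻¹' {r | ∃ ζ ∈ D, r ≤ anorm ζ} :=
    Set.ext fun x => ⟨fun hx => ⟨x, hx, le_rfl⟩, fun ⟨ζ, hζ, h⟩ => hD h hζ⟩
  rw [this]
  exact measurable_anorm hL.ordConnected.measurableSet

lemma IsAnormLowerSet.add_mem {D : Set FA} (hD : IsAnormLowerSet D) {a b : FA} (ha : a ∈ D)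
    (hb : b ∈ D) : a + b ∈ D := by
  rcases le_total (anorm a) (anorm b) with h | h
  · exact hD ((anorm_add_le a b).trans (max_le h le_rfl)) hb
  · exact hD ((anorm_add_le a b).trans (max_le le_rfl h)) ha

lemma IsAnormLowerSet.neg_mem {D : Set FA} (hD : IsAnormLowerSet D) {a : FA} (ha : a ∈ D) :
    -a ∈ D :=
  hD (anorm_neg a).le ha

lemma isAnormLowerSet_setOf_le {f : FA → ℝ} (hf : ∀ ξ ζ, anorm ξ ≤ anorm ζ → f ζ ≤ f ξ) (t : ℝ) :
    IsAnormLowerSet {ξ | t ≤ f ξ} :=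
  fun ξ ζ h hζ => le_trans hζ (hf ξ ζ h)

lemma unitBall_eq : unitBall = {x : FA | anorm x ≤ 1} := by
  ext x
  simp [anorm_le_iff, anormRadius, unitBall]

lemma measurableSet_unitBall : MeasurableSet unitBall :=
  unitBall_eq ▸ (isOpen_setOf_anorm_le one_pos).measurableSet

lemma achar_eq_finprod (x : FA) : achar x = ∏ᶠ p : Nat.Primes, padicAddChar p (x.1 p) := rfl

lemma hasFiniteMulSupport_padicAddChar (x : FA) :
    HasFiniteMulSupport fun p : Nat.Primes => padicAddChar p (x.1 p) :=
  (finite_setOf_one_lt_norm x).subset fun _ hp => not_le.1 fun h => hp (padicAddChar_eq_one h)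

lemma achar_eq_one {y : FA} (hy : y ∈ unitBall) : achar y = 1 :=
  finprod_eq_one_of_forall_eq_one fun p => padicAddChar_eq_one (hy p)

noncomputable def adeleAddChar : AddChar FA ℂ where
  toFun := achar
  map_zero_eq_one' := achar_eq_one fun _ => by simp
  map_add_eq_mul' x y := by
    simp only [achar_eq_finprod]
    rw [← finprod_mul_distrib (hasFiniteMulSupport_padicAddChar x)
      (hasFiniteMulSupport_padicAddChar y)]
    exact finprod_congr fun p => AddChar.map_add_eq_mul _ _ _

lemma achar_add (x y : FA) : achar (x + y) = achar x * achar y :=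
  adeleAddChar.map_add_eq_mul x y

lemma norm_achar (x : FA) : ‖achar x‖ = 1 := by
  rw [achar_eq_finprod, finprod_eq_prod _ (hasFiniteMulSupport_padicAddChar x), norm_prod]
  exact Finset.prod_eq_one fun p _ => norm_padicAddChar _

lemma continuous_achar_mul (x : FA) : Continuous fun ξ => achar (ξ * x) := by
  let K := {η : FA | ∀ p, ‖η.1 p‖ ≤ (max 1 ‖x.1 p‖)⁻¹}
  have hmax (p : Nat.Primes) : 0 < max 1 ‖x.1 p‖ := lt_max_of_lt_left one_pos
  have hK : K ∈ 𝓝 0 := by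
    refine setOf_forall_norm_le_mem_nhds_zero (fun p => inv_pos.2 (hmax p))
      ((finite_setOf_one_lt_norm x).subset fun p hp => ?_)
    simpa [lt_max_iff, inv_lt_one₀ (hmax p)] using hp
  have hKx (η : FA) (hη : η ∈ K) : achar (η * x) = 1 := by
    refine achar_eq_one fun p => ?_
    calc ‖(η * x).1 p‖ = ‖η.1 p‖ * ‖x.1 p‖ := norm_mul _ _
      _ ≤ (max 1 ‖x.1 p‖)⁻¹ * max 1 ‖x.1 p‖ := by gcongr; exacts [hη p, le_max_right _ _]
      _ = 1 := inv_mul_cancel₀ (hmax p).ne'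
  refine continuous_iff_continuousAt.2 fun ξ₀ =>
    (continuousAt_const (y := achar (ξ₀ * x))).congr ?_
  have : (-ξ₀ + ·) ⁻¹' K ∈ 𝓝 ξ₀ :=
    (continuous_const_add (-ξ₀)).continuousAt.preimage_mem_nhds (by simpa using hK)
  refine mem_of_superset this fun ξ hξ => ?_
  have : ξ * x = ξ₀ * x + (-ξ₀ + ξ) * x := by noncomm_ring
  change achar (ξ₀ * x) = achar (ξ * x)
  rw [this, achar_add, hKx _ hξ, mul_one]

noncomputable def single (p : Nat.Primes) (y : ℚ_[p.1]) : FA :=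
  ⟨Pi.single p y, (Set.finite_singleton p).subset fun q hq => by
    by_contra hqp
    exact hq (by simp [Pi.single_eq_of_ne hqp])⟩

lemma single_apply_self (p : Nat.Primes) (y : ℚ_[p.1]) : (single p y).1 p = y :=
  Pi.single_eq_same (M := fun q : Nat.Primes => ℚ_[q.1]) p y

lemma measure_setOf_le_anorm_eq_top (μ : Measure FA) [μ.IsAddLeftInvariant]
    (hμ : μ unitBall ≠ 0) (R : ℝ) : μ {ζ | R ≤ anorm ζ} = ⊤ := by
  let p : Nat.Primes := ⟨2, Nat.prime_two⟩
  have hp : (1 : ℝ) < p := by norm_num [p]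
  obtain ⟨N, hN⟩ := pow_unbounded_of_one_lt R hp
  let r (n : ℕ) : ℝ := (p : ℝ) ^ (N + n + 1)
  have hr (n : ℕ) : 1 < r n := one_lt_pow₀ hp (by omega)
  let E (n : ℕ) : Set FA :=
    (-single p ((p : ℚ_[p.1]) ^ (-(N + n + 1 : ℕ) : ℤ)) + ·) ⁻¹' unitBall
  have hE (n : ℕ) (y : FA) (hy : y ∈ E n) : ‖y.1 p‖ = r n := by
    set s := single p ((p : ℚ_[p.1]) ^ (-(N + n + 1 : ℕ) : ℤ))
    have hs : ‖s.1 p‖ = r n := by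
      rw [single_apply_self, Padic.norm_p_zpow, neg_neg, zpow_natCast]
    have hu : ‖(-s + y).1 p‖ < ‖s.1 p‖ := hs ▸ (hy p).trans_lt (hr n)
    have : y.1 p = s.1 p + (-s + y).1 p := by simp
    rw [this, IsUltrametricDist.norm_add_eq_max_of_norm_ne_norm hu.ne', max_eq_left hu.le, hs]
  have hdisj : Pairwise (Disjoint on E) := by
    intro m n hmn
    refine Set.disjoint_left.2 fun y hym hyn => hmn ?_
    have := (hE m y hym).symm.trans (hE n y hyn)
    simpa [r] using (pow_right_injective₀ (by positivity) hp.ne').eq_iff.1 this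
  have hsub : ⋃ n, E n ⊆ {ζ | R ≤ anorm ζ} := by
    refine iUnion_subset fun n y hy => ?_
    have h1 := (hE n y hy).symm.trans_le (norm_le_max_one_anorm y p)
    have h2 : (p : ℝ) ^ N ≤ r n := pow_le_pow_right₀ hp.le (by omega)
    exact (hN.trans_le h2).le.trans ((le_max_iff.1 h1).resolve_left (not_le.2 (hr n)))
  refine top_le_iff.1 (le_trans ?_ (measure_mono hsub))
  rw [measure_iUnion hdisj fun n => measurableSet_unitBall.preimage (measurable_const_add _)]
  simp [E, measure_preimage_add, ENNReal.tsum_const_eq_top_of_ne_zero hμ]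

lemma nonneg_of_integrable_of_anorm_antitone {μ : Measure FA} [μ.IsAddLeftInvariant]
    (hμ : μ unitBall ≠ 0) {f : FA → ℝ} (hf : ∀ ξ ζ, anorm ξ ≤ anorm ζ → f ζ ≤ f ξ)
    (hfi : Integrable f μ) : 0 ≤ f := by
  intro ξ₀
  by_contra! h
  refine (hfi.measure_norm_ge_lt_top (neg_pos.2 h)).ne (top_le_iff.1 ?_)
  rw [← measure_setOf_le_anorm_eq_top μ hμ (anorm ξ₀)]
  refine measure_mono fun ζ hζ => ?_
  have hle := hf ξ₀ ζ hζ
  change -f ξ₀ ≤ ‖f ζ‖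
  rw [Real.norm_of_nonpos (hle.trans h.le)]
  linarith

open ComplexOrder in
theorem integral_smul_achar_mul_nonneg {μ : Measure FA} [μ.IsAddLeftInvariant]
    (hμ : μ unitBall ≠ 0) {f : FA → ℝ} (hf : ∀ ξ ζ, anorm ξ ≤ anorm ζ → f ζ ≤ f ξ)
    (hfi : Integrable f μ) (x : FA) : 0 ≤ ∫ ξ, f ξ • achar (ξ * x) ∂μ :=
  have hlevel := isAnormLowerSet_setOf_le hf
  integral_smul_nonneg_of_setIntegral_superlevel_nonneg
    (measurable_of_Ici fun t => (hlevel t).measurableSet)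
    (nonneg_of_integrable_of_anorm_antitone hμ hf hfi) hfi
    (continuous_achar_mul x).stronglyMeasurable (fun _ => (norm_achar _).le)
    fun t _ => setIntegral_addChar_nonneg (adeleAddChar.compAddMonoidHom (AddMonoidHom.mulRight x))
      (hlevel t).measurableSet (fun _ ha _ hb => (hlevel t).add_mem ha hb)
      fun _ ha => (hlevel t).neg_mem ha

end FA

open MeasureTheory

theorem stmt_12_general (μ : Measure FA) (hinv : μ.IsAddLeftInvariant)
    (hone : μ unitBall = 1)
    (f : FA → ℝ) (hmono : ∀ ξ ζ : FA, anorm ξ ≤ anorm ζ → f ζ ≤ f ξ)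
    (hint : Integrable f μ) (x : FA) :
    (∫ ξ, achar (ξ * x) * (f ξ : ℂ) ∂μ).im = 0 ∧
    0 ≤ (∫ ξ, achar (ξ * x) * (f ξ : ℂ) ∂μ).re := by
  have h := Complex.nonneg_iff.1
    (FA.integral_smul_achar_mul_nonneg (by simp [hone]) hmono hint x)
  simp_rw [Complex.real_smul, mul_comm (f _ : ℂ)] at h
  exact ⟨h.2.symm, h.1⟩

/-- The inverse Fourier transform of an integrable, radial, non-increasing real-valued
function on `𝔸_f` is (real and) non-negative at every point. -/
theorem stmt_12 (μ : Measure FA) (hinv : μ.IsAddLeftInvariant) (hreg : μ.Regular)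
    (hone : μ unitBall = 1)
    (f : FA → ℝ) (hmono : ∀ ξ ζ : FA, anorm ξ ≤ anorm ζ → f ζ ≤ f ξ)
    (hint : Integrable f μ) (x : FA) :
    (∫ ξ, achar (ξ * x) * (f ξ : ℂ) ∂μ).im = 0 ∧
    0 ≤ (∫ ξ, achar (ξ * x) * (f ξ : ℂ) ∂μ).re :=
  stmt_12_general μ hinv hone f hmono hint x
end
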